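/- Let n ≥ 1 and let μ_{ij}, for 0 ≤ i ≤ n and 0 ≤ j ≤ n−1, be elements of a commutative ring, and let z be an element of that ring. Then the determinant of the (n+1)×(n+1) matrix whose entry in row i (0 ≤ i ≤ n) and column j is μ_{ij} for 0 ≤ j ≤ n−1 and z^i for j = n equals the determinant of the n×n matrix (z·μ_{ij} − μ_{i+1,j})_{0≤i,j≤n−1}. -/
import Mathlib

open Matrix

lemma bordered_key_mul {R : Type*} [CommRing R] (n : ℕ)
    (μ : Fin (n + 1) → Fin n → R) (z : R) :
    z ^ n * Matrix.det (Matrix.of fun i j : Fin (n + 1) =>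
        if h : (j : ℕ) < n then μ i ⟨(j : ℕ), h⟩ else z ^ (i : ℕ))
      = z ^ n * Matrix.det (Matrix.of fun i j : Fin n =>
          z * μ i.castSucc j - μ i.succ j) := by
  set M : Matrix (Fin (n+1)) (Fin (n+1)) R := Matrix.of fun i j =>
      if h : (j : ℕ) < n then μ i ⟨(j : ℕ), h⟩ else z ^ (i : ℕ) with hM
  set A : Matrix (Fin (n+1)) (Fin (n+1)) R := Matrix.of fun i k =>
      (if k = i then (if (i : ℕ) = n then 1 else z) else 0)
      + (if (k : ℕ) = (i : ℕ) + 1 then -1 else 0) with hA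
  -- determinant of A
  have hAtri : A.BlockTriangular id := by
    intro i k hk
    simp only [id] at hk
    have h1 : k ≠ i := ne_of_lt hk
    have h2 : (k : ℕ) ≠ (i : ℕ) + 1 := by
      have := (Fin.lt_iff_val_lt_val).mp hk; omega
    simp [hA, h1, h2]
  have hdetA : A.det = z ^ n := by
    rw [Matrix.det_of_upperTriangular hAtri]
    have hdiag : ∀ i : Fin (n+1), A i i = if (i : ℕ) = n then 1 else z := by
      intro i
      have : (i : ℕ) ≠ (i : ℕ) + 1 := by omega
      simp [hA, this]
    rw [Finset.prod_congr rfl (fun i _ => hdiag i)]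
    rw [Fin.prod_univ_castSucc]
    have h1 : ∀ i : Fin n, (if ((Fin.castSucc i : Fin (n+1)) : ℕ) = n then (1:R) else z) = z := by
      intro i
      have hv : ((Fin.castSucc i : Fin (n+1)) : ℕ) = (i : ℕ) := rfl
      rw [hv]
      simp [Nat.ne_of_lt i.isLt]
    rw [Finset.prod_congr rfl (fun i _ => h1 i)]
    simp
  -- product A * M
  have hAM : ∀ i j, (A * M) i j =
      (if (i : ℕ) = n then 1 else z) * M i j
        + (if h : (i : ℕ) < n then -M (Fin.succ ⟨(i:ℕ), h⟩) j else 0) := by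
    intro i j
    rw [Matrix.mul_apply]
    simp only [hA, Matrix.of_apply, add_mul]
    rw [Finset.sum_add_distrib]
    congr 1
    · rw [Finset.sum_eq_single i]
      · simp
      · intro k _ hk; simp [hk]
      · intro h; simp at h
    · by_cases h : (i : ℕ) < n
      · rw [dif_pos h, Finset.sum_eq_single (Fin.succ ⟨(i:ℕ), h⟩)]
        · have hv : ((Fin.succ ⟨(i:ℕ), h⟩ : Fin (n+1)) : ℕ) = (i : ℕ) + 1 := rfl
          rw [if_pos hv]; ring
        · intro k _ hk
          have : (k : ℕ) ≠ (i : ℕ) + 1 := by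
            intro hc
            exact hk (Fin.ext (by simpa using hc))
          simp [this]
        · intro hh; simp at hh
      · rw [dif_neg h, Finset.sum_eq_zero]
        intro k _
        have : (k : ℕ) ≠ (i : ℕ) + 1 := by
          have := k.isLt; have := i.isLt; omega
        simp [this]
  have hMl : ∀ i' : Fin (n+1), M i' (Fin.last n) = z ^ (i' : ℕ) := by
    intro i'; simp [hM]
  -- last column of A * M
  have hlast : ∀ i : Fin (n+1), (A * M) i (Fin.last n) =
      if (i : ℕ) = n then z ^ n else 0 := by
    intro i
    rw [hAM]
    by_cases h : (i : ℕ) = n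
    · have h2 : ¬ (i : ℕ) < n := by omega
      simp [hMl, h, h2]
    · have h2 : (i : ℕ) < n := by have := i.isLt; omega
      rw [if_neg h, dif_pos h2, hMl, hMl, if_neg h]
      have hv : ((Fin.succ ⟨(i:ℕ), h2⟩ : Fin (n+1)) : ℕ) = (i : ℕ) + 1 := rfl
      rw [hv]
      ring
  -- the submatrix
  have hsub : ((A * M).submatrix (Fin.last n).succAbove (Fin.last n).succAbove)
      = Matrix.of fun i j : Fin n => z * μ i.castSucc j - μ i.succ j := by
    ext i j
    simp only [Matrix.submatrix_apply, Fin.succAbove_last, Matrix.of_apply]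
    rw [hAM]
    have hi : ((Fin.castSucc i : Fin (n+1)) : ℕ) = (i : ℕ) := rfl
    have hilt : (i : ℕ) < n := i.isLt
    have hin : ((Fin.castSucc i : Fin (n+1)) : ℕ) ≠ n := by rw [hi]; omega
    rw [if_neg hin, dif_pos (by rw [hi]; exact hilt)]
    have hjlt : ((Fin.castSucc j : Fin (n+1)) : ℕ) < n := j.isLt
    have hsucc : (Fin.succ (⟨((Fin.castSucc i : Fin (n+1)) : ℕ), by rw [hi]; exact hilt⟩ : Fin n))
        = Fin.succ i := by
      apply Fin.ext; simp [hi]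
    rw [hsucc]
    have hMc : ∀ i' : Fin (n+1), M i' (Fin.castSucc j) = μ i' j := by
      intro i'
      simp only [hM, Matrix.of_apply, dif_pos hjlt]
      congr 1
    rw [hMc, hMc]
    ring
  -- compute det (A*M) by expansion along the last column
  have hkey : (A * M).det = z ^ n * Matrix.det (Matrix.of fun i j : Fin n =>
      z * μ i.castSucc j - μ i.succ j) := by
    rw [Matrix.det_succ_column (A * M) (Fin.last n)]
    rw [Finset.sum_eq_single (Fin.last n)]
    · rw [hlast, hsub]
      have hsign : ((-1:R)) ^ ((Fin.last n : ℕ) + (Fin.last n : ℕ)) = 1 :=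
        Even.neg_one_pow ⟨(Fin.last n : ℕ), by ring⟩
      rw [hsign, one_mul, if_pos (Fin.val_last n)]
    · intro i _ hi
      have : (i : ℕ) ≠ n := fun hc => hi (Fin.ext (by simpa using hc))
      rw [hlast, if_neg this]
      ring
    · intro hh; simp at hh
  calc z ^ n * M.det = A.det * M.det := by rw [hdetA]
    _ = (A * M).det := (Matrix.det_mul A M).symm
    _ = _ := hkey


/-- for scalars `μ i j` (`0 ≤ i ≤ n`, `0 ≤ j ≤ n-1`) and `z` in a
commutative ring, the determinant of the bordered `(n+1) × (n+1)` matrix whose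
`j`-th column is `(μ i j)` for `j < n` and whose last column is `(z^i)` equals the
determinant of the `n × n` matrix `(z * μ i j - μ (i+1) j)`. -/
theorem bordered_det_eq_det_shift
    {R : Type*} [CommRing R] (n : ℕ) (hn : 1 ≤ n)
    (μ : Fin (n + 1) → Fin n → R) (z : R) :
    Matrix.det (Matrix.of fun i j : Fin (n + 1) =>
        if h : (j : ℕ) < n then μ i ⟨(j : ℕ), h⟩ else z ^ (i : ℕ))
      = Matrix.det (Matrix.of fun i j : Fin n =>
          z * μ i.castSucc j - μ i.succ j) := by
  classical
  set σ := ((Fin (n+1) × Fin n) ⊕ Unit)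
  let μ' : Fin (n+1) → Fin n → MvPolynomial σ ℤ := fun i j => MvPolynomial.X (Sum.inl (i, j))
  let z' : MvPolynomial σ ℤ := MvPolynomial.X (Sum.inr ())
  have hz : z' ^ n ≠ 0 := pow_ne_zero _ (MvPolynomial.X_ne_zero _)
  have hpoly : Matrix.det (Matrix.of fun i j : Fin (n + 1) =>
        if h : (j : ℕ) < n then μ' i ⟨(j : ℕ), h⟩ else z' ^ (i : ℕ))
      = Matrix.det (Matrix.of fun i j : Fin n =>
          z' * μ' i.castSucc j - μ' i.succ j) :=
    mul_left_cancel₀ hz (bordered_key_mul n μ' z')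
  let f : MvPolynomial σ ℤ →+* R :=
    (MvPolynomial.aeval (Sum.elim (fun p : Fin (n+1) × Fin n => μ p.1 p.2)
      (fun _ : Unit => z))).toRingHom
  have hf := congrArg f hpoly
  rw [RingHom.map_det, RingHom.map_det] at hf
  have h1 : f.mapMatrix (Matrix.of fun i j : Fin (n + 1) =>
        if h : (j : ℕ) < n then μ' i ⟨(j : ℕ), h⟩ else z' ^ (i : ℕ))
      = Matrix.of fun i j : Fin (n + 1) =>
        if h : (j : ℕ) < n then μ i ⟨(j : ℕ), h⟩ else z ^ (i : ℕ) := by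
    ext i j
    simp only [RingHom.mapMatrix_apply, Matrix.map_apply, Matrix.of_apply]
    rw [apply_dite f]
    congr 1
    · funext h
      simp [f, μ']
    · funext h
      simp [f, z']
  have h2 : f.mapMatrix (Matrix.of fun i j : Fin n =>
        z' * μ' i.castSucc j - μ' i.succ j)
      = Matrix.of fun i j : Fin n => z * μ i.castSucc j - μ i.succ j := by
    ext i j
    simp [f, μ', z']
  rw [h1, h2] at hf
  exact hf
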